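/- arXiv:2202.07929 — 2 statements merged into one kernel-verified Lean document; each statement's English description precedes it below -/
import Mathlib

section
/- Every factor-critical edge-critical equimatchable graph with at least one edge has at least 7 vertices. -/
open SimpleGraph

/-- `M` is a maximal matching of `G` (viewed as a subgraph of `G`): it is a matching and it is
not properly contained in any other matching of `G`. -/
def IsMaximalMatching {V : Type*} (G : SimpleGraph V) (M : G.Subgraph) : Prop :=
  M.IsMatching ∧ ∀ M' : G.Subgraph, M'.IsMatching → M ≤ M' → M' = M

/-- `G` is equimatchable if all maximal matchings of `G` have the same cardinality. -/
def Equimatchable {V : Type*} (G : SimpleGraph V) : Prop :=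
  ∀ M₁ M₂ : G.Subgraph, IsMaximalMatching G M₁ → IsMaximalMatching G M₂ →
    M₁.edgeSet.ncard = M₂.edgeSet.ncard

/-- The matching number ν(G): the maximum cardinality of a matching of `G`. -/
noncomputable def matchNum {V : Type*} (G : SimpleGraph V) : ℕ :=
  sSup {n : ℕ | ∃ M : G.Subgraph, M.IsMatching ∧ M.edgeSet.ncard = n}

/-- `G` is vertex-critical equimatchable (VCE): `G` is equimatchable and deleting any vertex
yields a non-equimatchable graph. -/
def VCE {V : Type*} (G : SimpleGraph V) : Prop :=
  Equimatchable G ∧ ∀ v : V, ¬ Equimatchable (G.induce {u | u ≠ v})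

/-- `G` is edge-critical equimatchable (ECE): `G` is equimatchable and deleting any edge
yields a non-equimatchable graph. -/
def ECE {V : Type*} (G : SimpleGraph V) : Prop :=
  Equimatchable G ∧ ∀ u v : V, G.Adj u v → ¬ Equimatchable (G.deleteEdges {s(u, v)})

/-- `G` is factor-critical: deleting any vertex yields a graph with a perfect matching. -/
def FactorCritical {V : Type*} (G : SimpleGraph V) : Prop :=
  ∀ v : V, ∃ M : (G.induce {u | u ≠ v}).Subgraph, M.IsPerfectMatching

/-- `G` is 2-connected: at least 3 vertices, connected, and deleting any vertex leaves a
connected graph. -/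
def TwoConnected {V : Type*} [Fintype V] (G : SimpleGraph V) : Prop :=
  3 ≤ Fintype.card V ∧ G.Connected ∧ ∀ v : V, (G.induce {u | u ≠ v}).Connected

/-- `G` is bipartite: its vertex set can be partitioned into two parts such that every edge
joins the two parts. -/
def IsBipartiteGraph {V : Type*} (G : SimpleGraph V) : Prop :=
  ∃ s : Set V, ∀ u w : V, G.Adj u w → (u ∈ s ↔ w ∉ s)

/-- `G` is randomly matchable: every matching of `G` extends to a perfect matching. -/
def RandomlyMatchable {V : Type*} (G : SimpleGraph V) : Prop :=
  ∀ M : G.Subgraph, M.IsMatching → ∃ P : G.Subgraph, M ≤ P ∧ P.IsPerfectMatching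

/-!
Factor-criticality makes `|V|` odd and gives every vertex a neighbour outside any prescribed
vertex. A maximal matching of `G - ab` that covers `a` or `b` is still maximal in `G`, so, `G`
being equimatchable and `G - ab` not, some maximal matching `M` of `G - ab` leaves both `a` and
`b` exposed. It is non-empty because `b` has a neighbour other than `a`, whence `|V| ≥ 4`.
If `|V| ≤ 5`, parity forces `M` to be a single edge `xy` disjoint from `ab` whose ends meet every
other edge. For an edge `uv` with such an `xy`, a fifth vertex `z` has neighbourhood exactly
`{x, y}`; the covering edge of `zx` then forces `u` and `v` to be adjacent to `y`, and the
covering edge of `zy` would have to contain the three vertices `x`, `u`, `v`. So `|V| ≤ 5`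
would force `|V| = 4`, contradicting oddness.
-/

section Matchings

variable {V : Type*} {G : SimpleGraph V}

theorem isMaximalMatching_iff {M : G.Subgraph} :
    IsMaximalMatching G M ↔ M.IsMatching ∧ G.IsVertexCover M.verts := by
  refine ⟨fun hM => ⟨hM.1, fun c d hcd => ?_⟩,
    fun ⟨hM, hcov⟩ => ⟨hM, fun N hN hMN => ?_⟩⟩
  · by_contra! h
    have hd : Disjoint M.support (G.subgraphOfAdj hcd).support := by
      rw [hM.1.support_eq_verts, support_subgraphOfAdj, Set.disjoint_right]
      rintro t (rfl | rfl) <;> simp [h.1, h.2]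
    have hle : G.subgraphOfAdj hcd ≤ M :=
      hM.2 _ (hM.1.sup (.subgraphOfAdj hcd) hd) le_sup_left ▸ le_sup_right
    exact h.1 (hle.1 (by simp))
  · have hadj : ∀ ⦃c d⦄, N.Adj c d → M.Adj c d := by
      intro c d hcd
      rcases hcov (N.adj_sub hcd) with hc | hd
      · obtain ⟨d', hd', -⟩ := hM hc
        rwa [hN.eq_of_adj_left hcd (hMN.2 hd')]
      · obtain ⟨c', hc', -⟩ := hM hd
        rw [hN.eq_of_adj_right hcd (hMN.2 hc'.symm)]
        exact hc'.symm
    refine le_antisymm (?_ : N.verts ⊆ M.verts ∧ ∀ ⦃v w⦄, N.Adj v w → M.Adj v w) hMN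
    refine ⟨fun v hv => ?_, hadj⟩
    obtain ⟨w, hvw, -⟩ := hN hv
    exact M.edge_vert (hadj hvw)

theorem IsMaximalMatching.map_ofLE {H : SimpleGraph V} (hHG : H ≤ G) {M : H.Subgraph}
    (hM : IsMaximalMatching H M) (hcov : (G \ H).IsVertexCover M.verts) :
    IsMaximalMatching G (M.map (Hom.ofLE hHG)) := by
  rw [isMaximalMatching_iff] at hM ⊢
  refine ⟨hM.1.map_ofLE hHG, fun c d hcd => ?_⟩
  simp only [Subgraph.map_verts, Hom.coe_ofLE, Set.image_id]
  by_cases h : H.Adj c d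
  · exact hM.2 h
  · exact hcov ((sdiff_adj _ _ _ _).2 ⟨hcd, h⟩)

theorem Equimatchable.exists_isMaximalMatching_deleteEdges {a b : V} (hG : Equimatchable G)
    (hGab : ¬Equimatchable (G.deleteEdges {s(a, b)})) :
    ∃ M : (G.deleteEdges {s(a, b)}).Subgraph,
      IsMaximalMatching _ M ∧ a ∉ M.verts ∧ b ∉ M.verts := by
  by_contra! h
  have hlift : ∀ M, IsMaximalMatching _ M →
      IsMaximalMatching G (M.map (Hom.ofLE (G.deleteEdges_le {s(a, b)}))) := by
    refine fun M hM => hM.map_ofLE _ fun c d hcd => ?_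
    obtain ⟨hcd, hcd'⟩ := (sdiff_adj _ _ _ _).1 hcd
    have hab : s(c, d) = s(a, b) := by
      by_contra hne
      exact hcd' (deleteEdges_adj.2 ⟨hcd, hne⟩)
    have := h M hM
    rcases Sym2.eq_iff.1 hab with ⟨rfl, rfl⟩ | ⟨rfl, rfl⟩ <;> tauto
  exact hGab fun M₁ M₂ h₁ h₂ => by simpa using hG _ _ (hlift M₁ h₁) (hlift M₂ h₂)

theorem FactorCritical.exists_adj_ne (hfc : FactorCritical G) {v p : V} (hvp : v ≠ p) :
    ∃ t, G.Adj v t ∧ t ≠ p := by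
  obtain ⟨M, hM⟩ := hfc p
  obtain ⟨t, ht, -⟩ := hM.1 (hM.2 ⟨v, hvp⟩)
  exact ⟨t, M.adj_sub ht, t.2⟩

theorem FactorCritical.odd_card [Fintype V] [Nonempty V] (hfc : FactorCritical G) :
    Odd (Fintype.card V) := by
  classical
  obtain ⟨v⟩ := ‹Nonempty V›
  obtain ⟨M, hM⟩ := hfc v
  have heven := hM.even_card
  rw [Set.card_ne_eq] at heven
  have hpos := Fintype.card_pos (α := V)
  obtain ⟨k, hk⟩ := heven
  exact ⟨k, by omega⟩

theorem ECE.exists_nonempty_isMaximalMatching_deleteEdges {a b : V} (hece : ECE G)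
    (hfc : FactorCritical G) (hab : G.Adj a b) :
    ∃ M : (G.deleteEdges {s(a, b)}).Subgraph, IsMaximalMatching _ M ∧ a ∉ M.verts ∧
      b ∉ M.verts ∧ ∃ x y, M.Adj x y := by
  obtain ⟨M, hM, ha, hb⟩ := hece.1.exists_isMaximalMatching_deleteEdges (hece.2 a b hab)
  obtain ⟨t, hbt, hta⟩ := hfc.exists_adj_ne hab.ne'
  have ht : t ∈ M.verts := by
    refine ((isMaximalMatching_iff.1 hM).2 ?_).resolve_left hb
    simp [hbt, hta, hab.ne']
  obtain ⟨y, hty, -⟩ := hM.1 ht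
  exact ⟨M, hM, ha, hb, t, y, hty⟩

theorem ECE.four_le_card [Fintype V] {a b : V} (hece : ECE G) (hfc : FactorCritical G)
    (hab : G.Adj a b) : 4 ≤ Fintype.card V := by
  classical
  obtain ⟨M, -, ha, hb, x, y, hxy⟩ :=
    hece.exists_nonempty_isMaximalMatching_deleteEdges hfc hab
  have hx := M.edge_vert hxy
  have hy := M.edge_vert hxy.symm
  have hcard : ({a, b, x, y} : Finset V).card = 4 :=
    Finset.card_eq_four.2 ⟨a, b, x, y, hab.ne, by grind, by grind, by grind, by grind,
      (M.adj_sub hxy).ne, rfl⟩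
  exact hcard ▸ Finset.card_le_univ _

def IsCoveringEdge (G : SimpleGraph V) (a b x y : V) : Prop :=
  G.Adj x y ∧ x ≠ a ∧ x ≠ b ∧ y ≠ a ∧ y ≠ b ∧ (G.deleteEdges {s(a, b)}).IsVertexCover {x, y}

theorem IsCoveringEdge.eq_or_eq_of_adj {a b x y c d : V} (h : IsCoveringEdge G a b x y)
    (hcd : G.Adj c d) (hca : c ≠ a) (hcb : c ≠ b) : c = x ∨ c = y ∨ d = x ∨ d = y := by
  simpa [or_assoc] using h.2.2.2.2.2 (by simp [hcd, hca, hcb] : (G.deleteEdges {s(a, b)}).Adj c d)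

theorem ECE.exists_isCoveringEdge [Fintype V] (hcard : Fintype.card V ≤ 5) {a b : V}
    (hece : ECE G) (hfc : FactorCritical G) (hab : G.Adj a b) :
    ∃ x y, IsCoveringEdge G a b x y := by
  classical
  obtain ⟨M, hM, ha, hb, x, y, hxy⟩ :=
    hece.exists_nonempty_isMaximalMatching_deleteEdges hfc hab
  have hsub : {x, y} ⊆ M.verts := Set.pair_subset (M.edge_vert hxy) (M.edge_vert hxy.symm)
  have heven : Even M.verts.ncard := by
    rw [Set.ncard_eq_toFinset_card']
    exact hM.1.even_card
  have hle : M.verts.ncard + 2 ≤ 5 := by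
    have hdisj : Disjoint M.verts {a, b} := by
      rw [Set.disjoint_right]; rintro v (rfl | rfl) <;> assumption
    rw [← Set.ncard_pair hab.ne, ← Set.ncard_union_eq hdisj]
    exact (Set.ncard_le_card _).trans (Nat.card_eq_fintype_card (α := V) ▸ hcard)
  have hverts : M.verts = {x, y} := by
    refine (Set.eq_of_subset_of_ncard_le hsub ?_).symm
    rw [Set.ncard_pair (M.adj_sub hxy).ne]
    obtain ⟨k, hk⟩ := heven
    omega
  refine ⟨x, y, deleteEdges_le _ (M.adj_sub hxy), ?_, ?_, ?_, ?_,
    hverts ▸ (isMaximalMatching_iff.1 hM).2⟩ <;> grind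

section CoveringEdges

variable (hdeg : ∀ ⦃v p : V⦄, v ≠ p → ∃ t, G.Adj v t ∧ t ≠ p)
  (hcover : ∀ ⦃a b : V⦄, G.Adj a b → ∃ x y, IsCoveringEdge G a b x y)
include hdeg hcover

theorem adj_of_isCoveringEdge {x y z c : V} (hzx : G.Adj z x) (hzy : G.Adj z y) (hxy : x ≠ y)
    (hcz : c ≠ z) (hcx : c ≠ x) (hcy : c ≠ y) : G.Adj c y := by
  obtain ⟨p, q, hpq⟩ := hcover hzx
  obtain ⟨hpq', hpz, -, hqz, -, -⟩ := id hpq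
  have hy := hpq.eq_or_eq_of_adj hzy.symm hzy.ne' hxy.symm
  by_cases hc : c = p ∨ c = q
  · grind [SimpleGraph.Adj.symm]
  obtain ⟨t₁, hct₁, ht₁⟩ := hdeg (show c ≠ p by tauto)
  obtain ⟨t₂, hct₂, ht₂⟩ := hdeg (show c ≠ q by tauto)
  have h₁ := hpq.eq_or_eq_of_adj hct₁ hcz hcx
  have h₂ := hpq.eq_or_eq_of_adj hct₂ hcz hcx
  grind

theorem card_le_four_of_isCoveringEdge [Fintype V] {u v : V} (huv : G.Adj u v) :
    Fintype.card V ≤ 4 := by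
  classical
  obtain ⟨x, y, hxy⟩ := hcover huv
  obtain ⟨hxy', hxu, hxv, hyu, hyv, -⟩ := id hxy
  by_contra! h
  obtain ⟨z, -, hz⟩ := Finset.exists_mem_notMem_of_card_lt_card
    (Finset.card_le_four.trans_lt h : ({u, v, x, y} : Finset V).card < Finset.univ.card)
  simp only [Finset.mem_insert, Finset.mem_singleton, not_or] at hz
  obtain ⟨hzu, hzv, hzx, hzy⟩ := hz
  have hnbr : ∀ ⦃t⦄, G.Adj z t → t = x ∨ t = y := fun t ht => by
    have := hxy.eq_or_eq_of_adj ht hzu hzv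
    tauto
  have hzx' : G.Adj z x := by
    obtain ⟨t, ht, hty⟩ := hdeg hzy
    obtain rfl | rfl := hnbr ht
    exacts [ht, absurd rfl hty]
  have hzy' : G.Adj z y := by
    obtain ⟨t, ht, htx⟩ := hdeg hzx
    obtain rfl | rfl := hnbr ht
    exacts [absurd rfl htx, ht]
  have huy := adj_of_isCoveringEdge hdeg hcover hzx' hzy' hxy'.ne (Ne.symm hzu) hxu.symm hyu.symm
  have hvy := adj_of_isCoveringEdge hdeg hcover hzx' hzy' hxy'.ne (Ne.symm hzv) hxv.symm hyv.symm
  obtain ⟨p, q, hpq⟩ := hcover hzy'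
  obtain ⟨-, hpz, hpy, hqz, hqy, -⟩ := id hpq
  have hx := hpq.eq_or_eq_of_adj hzx'.symm hzx'.ne' hxy'.ne
  have hu := hpq.eq_or_eq_of_adj huy (Ne.symm hzu) hyu.symm
  have hv := hpq.eq_or_eq_of_adj hvy (Ne.symm hzv) hyv.symm
  have := huv.ne
  grind

end CoveringEdges

end Matchings

/-- Every factor-critical edge-critical equimatchable graph with at least one edge has at
least 7 vertices. -/
theorem fc_ece_seven_vertices {V : Type*} [Fintype V] (G : SimpleGraph V)
    (hfc : FactorCritical G) (hece : ECE G) (hedge : G.edgeSet.Nonempty) :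
    7 ≤ Fintype.card V := by
  obtain ⟨a, b, hab⟩ := ne_bot_iff_exists_adj.1 (edgeSet_nonempty.1 hedge)
  have : Nonempty V := ⟨a⟩
  obtain ⟨k, hk⟩ := hfc.odd_card
  have h4 := hece.four_le_card hfc hab
  by_contra! h7
  have h4' := card_le_four_of_isCoveringEdge (fun _ _ => hfc.exists_adj_ne)
    (fun _ _ => hece.exists_isCoveringEdge (by omega) hfc) hab
  omega
end

section
/- Let r ≥ 1 be an integer and let G be a connected graph on 2r+1 vertices. If G contains an induced subgraph isomorphic to K_{2r} or an induced subgraph isomorphic to K_{r,r}, then G is not edge-critical equimatchable. -/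
open SimpleGraph

/-!
Pick a neighbour `a` of the vertex `w` outside the clique (resp. biclique) and a vertex `b`
of the clique (resp. of the other side) and show that `G - ab` is still equimatchable. As
`|V| = 2r + 1` is odd, a maximal matching has `r` edges as soon as it leaves at most two
vertices unsaturated, or saturates an independent set of `r` vertices.

The unsaturated vertices of a maximal matching are independent. In the clique case every
independent set of `G - ab` has at most two vertices, because `w ~ a`. In the biclique case an
unsaturated vertex of one side other than `a`, `b` is adjacent to the whole other side, which is
then saturated; otherwise only `a`, `b`, `w` can be unsaturated, and not both `a` and `w`.
-/

theorem Set.ncard_le_two_of_subset_pair {α : Type*} {s : Set α} {x y : α} (h : s ⊆ {x, y}) :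
    s.ncard ≤ 2 :=
  (Set.ncard_le_ncard h).trans ((Set.ncard_insert_le x {y}).trans (by rw [Set.ncard_singleton]))

theorem Function.Injective.exists_compl_range_eq_singleton {α β : Type*} [Finite β]
    {f : α → β} (hf : Function.Injective f) (hβ : Nat.card β = Nat.card α + 1) :
    ∃ b, (Set.range f)ᶜ = {b} := by
  have := Set.ncard_add_ncard_compl (Set.range f)
  rw [Set.ncard_range_of_injective hf, hβ] at this
  exact Set.ncard_eq_one.1 (by omega)

namespace SimpleGraph

variable {V : Type*} {G H : SimpleGraph V}

namespace Subgraph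

variable {M : H.Subgraph}

theorem IsMatching.ncard_verts [Finite V] (hM : M.IsMatching) :
    M.verts.ncard = 2 * M.edgeSet.ncard := by
  classical
  have : Fintype V := Fintype.ofFinite V
  have hfiber : ∀ e : M.edgeSet, Nat.card (hM.toEdge ⁻¹' {e}) = 2 := by
    rintro ⟨e, he⟩
    induction e using Sym2.ind with
    | _ u v =>
      rw [hM.toEdge_preimage_singleton he, Nat.card_coe_set_eq, Set.ncard_pair]
      simpa using he.ne
  calc M.verts.ncard = Nat.card M.verts := (Nat.card_coe_set_eq _).symm
    _ = Nat.card (Σ e : M.edgeSet, hM.toEdge ⁻¹' {e}) :=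
      Nat.card_congr (Equiv.sigmaFiberEquiv hM.toEdge).symm
    _ = 2 * M.edgeSet.ncard := by
      rw [Nat.card_sigma, Finset.sum_congr rfl fun e _ => hfiber e, Finset.sum_const,
        Finset.card_univ, smul_eq_mul, mul_comm, ← Nat.card_eq_fintype_card,
        Nat.card_coe_set_eq]

/-- Distinct vertices of an independent set lie in distinct edges of the matching. -/
theorem IsMatching.ncard_le_ncard_edgeSet [Finite V] (hM : M.IsMatching) {X : Set V}
    (hXM : X ⊆ M.verts) (hX : H.IsIndepSet X) : X.ncard ≤ M.edgeSet.ncard := by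
  have hedge : ∀ x, ∃ e : Sym2 V, x ∈ X → e ∈ M.edgeSet ∧ x ∈ e := fun x => by
    by_cases hx : x ∈ X
    · obtain ⟨y, hxy, -⟩ := hM (hXM hx)
      exact ⟨s(x, y), fun _ => ⟨hxy, Sym2.mem_mk_left x y⟩⟩
    · exact ⟨s(x, x), fun h => absurd h hx⟩
  choose e he using hedge
  refine Set.ncard_le_ncard_of_injOn e (fun x hx => (he x hx).1) ?_
  intro x hx y hy hxy
  by_contra hne
  have hexy : e x = s(x, y) := (Sym2.mem_and_mem_iff hne).mp ⟨(he x hx).2, hxy ▸ (he y hy).2⟩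
  have hxy' : s(x, y) ∈ M.edgeSet := hexy ▸ (he x hx).1
  exact hX hx hy hne (M.adj_sub hxy')

/-- The parity of `2 * #M + #(unsaturated vertices) = 2r + 1` turns "at most two" into
"at most one". -/
theorem IsMatching.le_ncard_edgeSet_of_ncard_compl_verts_le_two [Finite V] {r : ℕ}
    (hV : Nat.card V = 2 * r + 1) (hM : M.IsMatching) (hU : M.vertsᶜ.ncard ≤ 2) :
    r ≤ M.edgeSet.ncard := by
  have := Set.ncard_add_ncard_compl M.verts
  rw [hM.ncard_verts, hV] at this
  omega

end Subgraph

theorem IsMaximalMatching.isIndepSet_compl_verts {M : H.Subgraph}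
    (hM : IsMaximalMatching H M) : H.IsIndepSet M.vertsᶜ := by
  intro u hu v hv _ huv
  have hedge := Subgraph.IsMatching.subgraphOfAdj huv
  have hdisj : Disjoint M.support (H.subgraphOfAdj huv).support := by
    rw [hM.1.support_eq_verts, hedge.support_eq_verts, subgraphOfAdj_verts,
      Set.disjoint_right]
    rintro x (rfl | rfl) <;> assumption
  have hsup := hM.2 _ (hM.1.sup hedge hdisj) le_sup_left
  apply hu
  rw [← hsup]
  exact Or.inr (by simp)

theorem IsMaximalMatching.mem_verts_of_adj {M : H.Subgraph} (hM : IsMaximalMatching H M)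
    {u v : V} (huv : H.Adj u v) (hu : u ∉ M.verts) : v ∈ M.verts := by
  by_contra hv
  exact hM.isIndepSet_compl_verts hu hv huv.ne huv

theorem equimatchable_of_forall_le_ncard_edgeSet [Finite V] {r : ℕ}
    (hV : Nat.card V ≤ 2 * r + 1)
    (h : ∀ M : H.Subgraph, IsMaximalMatching H M → r ≤ M.edgeSet.ncard) :
    Equimatchable H := by
  have hle : ∀ M : H.Subgraph, M.IsMatching → M.edgeSet.ncard ≤ r := fun M hM => by
    have := Set.ncard_le_card M.verts
    rw [hM.ncard_verts] at this
    omega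
  intro M₁ M₂ hM₁ hM₂
  rw [(hle M₁ hM₁.1).antisymm (h M₁ hM₁), (hle M₂ hM₂.1).antisymm (h M₂ hM₂)]

theorem IsMaximalMatching.ncard_le_ncard_edgeSet_of_forall_adj [Finite V] {M : H.Subgraph}
    (hM : IsMaximalMatching H M) {u : V} (hu : u ∉ M.verts) {Y : Set V} (hY : H.IsIndepSet Y)
    (hadj : ∀ y ∈ Y, H.Adj u y) : Y.ncard ≤ M.edgeSet.ncard :=
  hM.1.ncard_le_ncard_edgeSet (fun y hy => hM.mem_verts_of_adj (hadj y hy) hu) hY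

theorem IsIndepSet.deleteEdges {S : Set V} (hS : G.IsIndepSet S) (s : Set (Sym2 V)) :
    (G.deleteEdges s).IsIndepSet S :=
  hS.mono' fun _ _ h h' => h (deleteEdges_le s h')

variable {a b w : V}

theorem deleteEdges_adj_of_left_ne {x y : V} (h : G.Adj x y) (hxa : x ≠ a) (hxb : x ≠ b) :
    (G.deleteEdges {s(a, b)}).Adj x y :=
  (deleteEdges_adj ..).2 ⟨h, by simp [hxa, hxb]⟩

/-- Every vertex other than `b` is adjacent to `a` in `G - ab`, and the other vertices of the
clique stay pairwise adjacent. -/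
theorem ncard_le_two_of_isIndepSet_deleteEdges_of_isClique [Finite V] {S s : Set V}
    (hS : G.IsClique S) (hSw : Sᶜ ⊆ {w}) (ha : a ∈ S) (hwa : G.Adj w a)
    (hs : (G.deleteEdges {s(a, b)}).IsIndepSet s) : s.ncard ≤ 2 := by
  by_cases has : a ∈ s
  · refine Set.ncard_le_two_of_subset_pair (x := a) (y := b) fun v hv => ?_
    by_contra hvab
    simp only [Set.mem_insert_iff, Set.mem_singleton_iff, not_or] at hvab
    have hGva : G.Adj v a := by
      by_cases hvS : v ∈ S
      · exact hS hvS ha hvab.1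
      · exact (hSw hvS : v = w) ▸ hwa
    exact hs hv has hvab.1 (deleteEdges_adj_of_left_ne hGva hvab.1 hvab.2)
  · have hsub : (s \ {w}).ncard ≤ 1 := by
      refine Set.ncard_le_one_iff_subsingleton.2 fun x hx y hy => ?_
      by_contra hxy
      have hxS : x ∈ S := not_not.1 fun h => hx.2 (hSw h)
      have hyS : y ∈ S := not_not.1 fun h => hy.2 (hSw h)
      have hxa : x ≠ a := fun h => has (h ▸ hx.1)
      have hya : y ≠ a := fun h => has (h ▸ hy.1)
      exact hs hx.1 hy.1 hxy
        ((deleteEdges_adj ..).2 ⟨hS hxS hyS hxy, by simp [hxa, hya]⟩)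
    calc s.ncard ≤ (insert w (s \ {w})).ncard :=
          Set.ncard_le_ncard (fun v hv => by by_cases hvw : v = w <;> simp [hv, hvw])
      _ ≤ 2 := (Set.ncard_insert_le _ _).trans (by omega)

theorem equimatchable_deleteEdges_of_isClique [Finite V] {r : ℕ} (hV : Nat.card V = 2 * r + 1)
    {S : Set V} (hS : G.IsClique S) (hSw : Sᶜ ⊆ {w}) (ha : a ∈ S) (hwa : G.Adj w a) :
    Equimatchable (G.deleteEdges {s(a, b)}) :=
  equimatchable_of_forall_le_ncard_edgeSet hV.le fun _ hM =>
    hM.1.le_ncard_edgeSet_of_ncard_compl_verts_le_two hV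
      (ncard_le_two_of_isIndepSet_deleteEdges_of_isClique hS hSw ha hwa hM.isIndepSet_compl_verts)

theorem equimatchable_deleteEdges_of_biclique [Finite V] {r : ℕ} (hV : Nat.card V = 2 * r + 1)
    {A B : Set V} (hA : G.IsIndepSet A) (hB : G.IsIndepSet B)
    (hAB : ∀ x ∈ A, ∀ y ∈ B, G.Adj x y) (hAr : A.ncard = r) (hBr : B.ncard = r)
    (hABw : (A ∪ B)ᶜ ⊆ {w}) (ha : a ∈ A) (hb : b ∈ B) (hwa : G.Adj w a) :
    Equimatchable (G.deleteEdges {s(a, b)}) := by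
  refine equimatchable_of_forall_le_ncard_edgeSet hV.le fun M hM => ?_
  have hAB_disj : ∀ x ∈ A, x ∉ B := fun x hxA hxB => (hAB x hxA x hxB).ne rfl
  by_cases hA' : ∃ u ∈ A, u ≠ a ∧ u ∉ M.verts
  · obtain ⟨u, hu, hua, huM⟩ := hA'
    refine hBr ▸ hM.ncard_le_ncard_edgeSet_of_forall_adj huM (hB.deleteEdges _) fun y hy => ?_
    exact deleteEdges_adj_of_left_ne (hAB u hu y hy) hua fun h => hAB_disj u hu (h ▸ hb)
  by_cases hB' : ∃ u ∈ B, u ≠ b ∧ u ∉ M.verts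
  · obtain ⟨u, hu, hub, huM⟩ := hB'
    refine hAr ▸ hM.ncard_le_ncard_edgeSet_of_forall_adj huM (hA.deleteEdges _) fun x hx => ?_
    exact deleteEdges_adj_of_left_ne (hAB x hx u hu).symm (fun h => hAB_disj a ha (h ▸ hu)) hub
  push Not at hA' hB'
  have hU : ∀ u ∉ M.verts, u = a ∨ u = b ∨ u = w := by
    intro u hu
    by_cases huA : u ∈ A
    · exact Or.inl (not_not.1 fun h => hu (hA' u huA h))
    by_cases huB : u ∈ B
    · exact Or.inr (Or.inl (not_not.1 fun h => hu (hB' u huB h)))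
    exact Or.inr (Or.inr (hABw (by simp [huA, huB])))
  refine hM.1.le_ncard_edgeSet_of_ncard_compl_verts_le_two hV ?_
  by_cases haM : a ∈ M.verts
  · refine Set.ncard_le_two_of_subset_pair (x := b) (y := w) fun u hu => ?_
    rcases hU u hu with rfl | h | h
    · exact absurd haM hu
    all_goals simp [h]
  · have hwb : w ∉ M.verts → w = b := fun hwM => by
      by_contra hwb
      exact hwM (hM.mem_verts_of_adj (deleteEdges_adj_of_left_ne hwa hwa.ne hwb).symm haM)
    refine Set.ncard_le_two_of_subset_pair (x := a) (y := b) fun u hu => ?_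
    rcases hU u hu with h | h | rfl
    · simp [h]
    · simp [h]
    · simp [hwb hu]

theorem Connected.exists_adj_mem_of_compl_eq_singleton (hG : G.Connected) {S : Set V}
    (hS : Sᶜ = {w}) (hne : S.Nonempty) : ∃ x ∈ S, G.Adj w x := by
  have hwS : w ∉ S := (hS.symm ▸ rfl : w ∈ Sᶜ)
  have : Nontrivial V := ⟨⟨hne.some, w, fun h => hwS (h ▸ hne.some_mem)⟩⟩
  obtain ⟨x, hwx⟩ := hG.preconnected.exists_adj_of_nontrivial w
  refine ⟨x, not_not.1 fun hx => hwx.ne ?_, hwx⟩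
  exact ((hS ▸ hx : x ∈ ({w} : Set V)) : x = w).symm

theorem not_ece_of_top_embedding [Finite V] {r : ℕ} (hr : 1 ≤ r) (hG : G.Connected)
    (hV : Nat.card V = 2 * r + 1) (f : (⊤ : SimpleGraph (Fin (2 * r))) ↪g G) : ¬ ECE G := by
  rintro ⟨-, hcrit⟩
  obtain ⟨w, hw⟩ := f.injective.exists_compl_range_eq_singleton (by simp [hV])
  obtain ⟨_, ⟨i, rfl⟩, hwa⟩ :=
    hG.exists_adj_mem_of_compl_eq_singleton hw ⟨f ⟨0, by omega⟩, _, rfl⟩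
  have : Nontrivial (Fin (2 * r)) := Fin.nontrivial_iff_two_le.2 (by omega)
  obtain ⟨j, hji⟩ := exists_ne i
  exact hcrit (f i) (f j) (f.map_adj_iff.2 hji.symm) <|
    equimatchable_deleteEdges_of_isClique hV (isClique_range_copy_top f.toCopy) hw.le
      ⟨i, rfl⟩ hwa

theorem not_ece_of_completeBipartiteGraph_embedding [Finite V] {r : ℕ} (hr : 1 ≤ r)
    (hG : G.Connected) (hV : Nat.card V = 2 * r + 1)
    (f : completeBipartiteGraph (Fin r) (Fin r) ↪g G) : ¬ ECE G := by
  rintro ⟨-, hcrit⟩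
  set A := Set.range (f ∘ Sum.inl)
  set B := Set.range (f ∘ Sum.inr)
  have hAB : ∀ x ∈ A, ∀ y ∈ B, G.Adj x y := by
    rintro _ ⟨i, rfl⟩ _ ⟨j, rfl⟩
    exact f.map_adj_iff.2 (by simp)
  have hA : G.IsIndepSet A := by
    rintro _ ⟨i, rfl⟩ _ ⟨j, rfl⟩ - h
    simpa using f.map_adj_iff.1 h
  have hB : G.IsIndepSet B := by
    rintro _ ⟨i, rfl⟩ _ ⟨j, rfl⟩ - h
    simpa using f.map_adj_iff.1 h
  have hAr : A.ncard = r := by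
    simp [A, Set.ncard_range_of_injective (f.injective.comp Sum.inl_injective)]
  have hBr : B.ncard = r := by
    simp [B, Set.ncard_range_of_injective (f.injective.comp Sum.inr_injective)]
  obtain ⟨w, hw⟩ := f.injective.exists_compl_range_eq_singleton (by simp [hV, two_mul])
  rw [Sum.range_eq] at hw
  obtain ⟨x, hx, hwx⟩ :=
    hG.exists_adj_mem_of_compl_eq_singleton hw ⟨f (Sum.inl ⟨0, hr⟩), Or.inl ⟨_, rfl⟩⟩
  rcases hx with ⟨i, rfl⟩ | ⟨i, rfl⟩
  · exact hcrit _ (f (Sum.inr i)) (hAB _ ⟨i, rfl⟩ _ ⟨i, rfl⟩) <|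
      equimatchable_deleteEdges_of_biclique hV hA hB hAB hAr hBr hw.le ⟨i, rfl⟩ ⟨i, rfl⟩ hwx
  · exact hcrit _ (f (Sum.inl i)) (hAB _ ⟨i, rfl⟩ _ ⟨i, rfl⟩).symm <|
      equimatchable_deleteEdges_of_biclique hV hB hA (fun x hx y hy => (hAB y hy x hx).symm)
        hBr hAr (Set.union_comm B A ▸ hw.le) ⟨i, rfl⟩ ⟨i, rfl⟩ hwx

end SimpleGraph

/-- Let `r ≥ 1` and let `G` be a connected graph on `2r+1` vertices. If `G` contains an
induced `K_{2r}` or an induced `K_{r,r}`, then `G` is not edge-critical equimatchable. -/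
theorem contains_big_clique_or_biclique_not_ece {V : Type*} [Fintype V] (r : ℕ)
    (hr : 1 ≤ r) (G : SimpleGraph V) (hconn : G.Connected)
    (hcard : Fintype.card V = 2 * r + 1)
    (hsub : Nonempty ((⊤ : SimpleGraph (Fin (2 * r))) ↪g G) ∨
      Nonempty (completeBipartiteGraph (Fin r) (Fin r) ↪g G)) :
    ¬ ECE G := by
  have hV : Nat.card V = 2 * r + 1 := Nat.card_eq_fintype_card.trans hcard
  rcases hsub with ⟨⟨f⟩⟩ | ⟨⟨f⟩⟩
  exacts [not_ece_of_top_embedding hr hconn hV f,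
    not_ece_of_completeBipartiteGraph_embedding hr hconn hV f]
end
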